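/- arXiv:2009.14652 — 5 statements merged into one kernel-verified Lean document; each statement's English description precedes it below -/
import Mathlib

section
/- For all real numbers x > 0 and y > 0, one has P_4^{(1,−5)}(1 − 2x²/y²)/y² − 1/x² = (x² − y²)⁵/(x²·y¹⁰). -/
noncomputable section

/-- Ascending Pochhammer symbol `(x)_s = x(x+1)⋯(x+s-1)`. -/
def poch (x : ℝ) (s : ℕ) : ℝ := ∏ i ∈ Finset.range s, (x + i)

/-- Jacobi polynomial `P_r^{(a,b)}(z)`, defined via the hypergeometric series
`P_r^{(a,b)}(z) = (Γ(a+r+1)/(r!·Γ(a+1)))·Σ_{s=0}^{r}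
  [((−r)_s·(a+b+r+1)_s)/((a+1)_s·s!)]·((1−z)/2)^s`. -/
def jacobiP (a b : ℝ) (r : ℕ) (z : ℝ) : ℝ :=
  Real.Gamma (a + r + 1) / (r.factorial * Real.Gamma (a + 1)) *
    ∑ s ∈ Finset.range (r + 1),
      poch (-(r : ℝ)) s * poch (a + b + r + 1) s / (poch (a + 1) s * s.factorial) *
        ((1 - z) / 2) ^ s

theorem stmt1 (x y : ℝ) (hx : 0 < x) (hy : 0 < y) :
    jacobiP 1 (-5) 4 (1 - 2 * x ^ 2 / y ^ 2) / y ^ 2 - 1 / x ^ 2 =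
      (x ^ 2 - y ^ 2) ^ 5 / (x ^ 2 * y ^ 10) := by
  have h6 : Real.Gamma (1 + (4:ℕ) + 1) = 120 := by
    rw [show (1:ℝ) + (4:ℕ) + 1 = (5:ℕ) + 1 by norm_num, Real.Gamma_nat_eq_factorial]
    norm_num [Nat.factorial]
  have h2 : Real.Gamma ((1:ℝ) + 1) = 1 := by
    rw [show (1:ℝ) + 1 = (1:ℕ) + 1 by norm_num, Real.Gamma_nat_eq_factorial]
    norm_num
  simp only [jacobiP, poch, Finset.sum_range_succ, Finset.prod_range_succ,
    Finset.sum_range_zero, Finset.prod_range_zero, h6, h2, Nat.factorial]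
  have hx2 : x ^ 2 ≠ 0 := by positivity
  have hy2 : y ^ 2 ≠ 0 := by positivity
  field_simp
  ring
end
end

section
/- For all real numbers x > 0 and y > 0, one has P_6^{(2,−7)}(1 − 2x²/y²)/y⁴ − 1/x⁴ = (x² − y²)⁷·(7x² + y²)/(x⁴·y¹⁶). -/
noncomputable section

theorem stmt2 (x y : ℝ) (hx : 0 < x) (hy : 0 < y) :
    jacobiP 2 (-7) 6 (1 - 2 * x ^ 2 / y ^ 2) / y ^ 4 - 1 / x ^ 4 =
      (x ^ 2 - y ^ 2) ^ 7 * (7 * x ^ 2 + y ^ 2) / (x ^ 4 * y ^ 16) := by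
  have h9 : Real.Gamma ((2:ℝ) + 6 + 1) = 40320 := by
    rw [show (2:ℝ) + 6 + 1 = ((8:ℕ):ℝ) + 1 by norm_num, Real.Gamma_nat_eq_factorial]
    norm_num [Nat.factorial]
  have h3 : Real.Gamma ((2:ℝ) + 1) = 2 := by
    rw [show (2:ℝ) + 1 = ((2:ℕ):ℝ) + 1 by norm_num, Real.Gamma_nat_eq_factorial]
    norm_num [Nat.factorial]
  unfold jacobiP
  rw [show ((6:ℕ):ℝ) = 6 by norm_num] at *
  rw [h9, h3]
  simp only [poch, Finset.sum_range_succ, Finset.prod_range_succ, Finset.prod_range_zero,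
    Nat.factorial]
  push_cast
  field_simp
  ring
end
end

section
/- For all real numbers x > 0 and y > 0, one has P_8^{(3,−9)}(1 − 2x²/y²)/y⁶ − 1/x⁶ = (x² − y²)⁹·(45x⁴ + 9x²y² + y⁴)/(x⁶·y²²). -/
noncomputable section

theorem stmt3 (x y : ℝ) (hx : 0 < x) (hy : 0 < y) :
    jacobiP 3 (-9) 8 (1 - 2 * x ^ 2 / y ^ 2) / y ^ 6 - 1 / x ^ 6 =
      (x ^ 2 - y ^ 2) ^ 9 * (45 * x ^ 4 + 9 * x ^ 2 * y ^ 2 + y ^ 4) / (x ^ 6 * y ^ 22) := by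
  have h1 : Real.Gamma (3 + (8:ℕ) + 1) = 39916800 := by
    rw [show (3:ℝ) + (8:ℕ) + 1 = (11:ℕ)+1 by norm_num, Real.Gamma_nat_eq_factorial]
    norm_num [Nat.factorial]
  have h2 : Real.Gamma (3 + 1 : ℝ) = 6 := by
    rw [show (3:ℝ) + 1 = (3:ℕ)+1 by norm_num, Real.Gamma_nat_eq_factorial]
    norm_num [Nat.factorial]
  have hx6 : x ^ 6 ≠ 0 := by positivity
  have hy2 : y ^ 2 ≠ 0 := by positivity
  have hy22 : y ^ 22 ≠ 0 := by positivity
  simp only [jacobiP, poch, Finset.sum_range_succ, Finset.prod_range_succ,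
    Finset.prod_range_zero, Finset.sum_range_zero, h1, h2, Nat.factorial]
  push_cast
  field_simp
  ring
end
end

section
/- For all real numbers x > 0 and y > 0, one has P_10^{(4,−11)}(1 − 2x²/y²)/y⁸ − 1/x⁸ = (x² − y²)¹¹·(286x⁶ + 66x⁴y² + 11x²y⁴ + y⁶)/(x⁸·y²⁸). -/
noncomputable section

theorem stmt4 (x y : ℝ) (hx : 0 < x) (hy : 0 < y) :
    jacobiP 4 (-11) 10 (1 - 2 * x ^ 2 / y ^ 2) / y ^ 8 - 1 / x ^ 8 =
      (x ^ 2 - y ^ 2) ^ 11 *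
        (286 * x ^ 6 + 66 * x ^ 4 * y ^ 2 + 11 * x ^ 2 * y ^ 4 + y ^ 6) /
        (x ^ 8 * y ^ 28) := by
  have h15 : Real.Gamma (4 + (10 : ℕ) + 1) = 87178291200 := by
    rw [show (4 + ((10:ℕ):ℝ) + 1) = (14:ℕ) + 1 by norm_num, Real.Gamma_nat_eq_factorial]
    norm_num [Nat.factorial]
  have h5 : Real.Gamma (4 + 1 : ℝ) = 24 := by
    rw [show (4 + 1 : ℝ) = (4:ℕ) + 1 by norm_num, Real.Gamma_nat_eq_factorial]
    norm_num [Nat.factorial]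
  simp only [jacobiP, poch, Finset.sum_range_succ, Finset.prod_range_succ,
    Finset.prod_range_zero, h15, h5]
  norm_num [Nat.factorial]
  have hx8 : x ^ 8 ≠ 0 := by positivity
  have hy2 : y ^ 2 ≠ 0 := by positivity
  field_simp
  ring
end
end

section
/- Let ℓ ≥ 3 be an integer, set k := 2 − ℓ/2, and let χ be an even, non-trivial Dirichlet character of modulus M_χ. Then f_ℓ⁻ decays exponentially as v → ∞: there exist constants C > 0 and δ > 0 such that |f_ℓ⁻(τ)| ≤ C·e^{−δ·v} for all τ = u + iv ∈ ℍ with v ≥ 1. -/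
open Complex MeasureTheory
open scoped Real

noncomputable section

/-- Upper incomplete Gamma function `Γ(s,x) = ∫_x^∞ t^{s-1} e^{-t} dt`. -/
def incGamma (s x : ℝ) : ℝ := ∫ t in Set.Ioi x, t ^ (s - 1) * Real.exp (-t)

/-- Partial derivative `∂/∂u` (real direction). -/
def pdx (f : ℂ → ℂ) (τ : ℂ) : ℂ := deriv (fun t : ℝ => f (τ + t)) 0

/-- Partial derivative `∂/∂v` (imaginary direction). -/
def pdy (f : ℂ → ℂ) (τ : ℂ) : ℂ := deriv (fun t : ℝ => f (τ + t * Complex.I)) 0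

/-- Wirtinger derivative `∂/∂τ̄ = (1/2)(∂/∂u + i ∂/∂v)`. -/
def dbar (f : ℂ → ℂ) (τ : ℂ) : ℂ := (pdx f τ + Complex.I * pdy f τ) / 2

/-- Bruinier–Funke operator `ξ_κ f(τ) = 2i v^κ conj(∂f/∂τ̄)`. -/
def xiOp (κ : ℝ) (f : ℂ → ℂ) (τ : ℂ) : ℂ :=
  2 * Complex.I * ((τ.im ^ κ : ℝ) : ℂ) * (starRingEnd ℂ) (dbar f τ)

/-- Weight `k` hyperbolic Laplacian `Δ_k = -v²(∂_u² + ∂_v²) + ikv(∂_u + i∂_v)`. -/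
def hypLap (k : ℝ) (f : ℂ → ℂ) (τ : ℂ) : ℂ :=
  -(τ.im : ℂ) ^ 2 * (pdx (pdx f) τ + pdy (pdy f) τ) +
    Complex.I * (k : ℂ) * (τ.im : ℂ) * (pdx f τ + Complex.I * pdy f τ)

/-- Weight `κ` holomorphic projection. -/
def holProj (κ : ℤ) (f : ℂ → ℂ) (τ : ℂ) : ℂ :=
  ((κ : ℂ) - 1) * (2 * Complex.I) ^ κ / (4 * (π : ℂ)) *
    ∫ p in (Set.univ ×ˢ Set.Ioi (0 : ℝ) : Set (ℝ × ℝ)),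
      f (p.1 + p.2 * Complex.I) * (p.2 : ℂ) ^ κ /
        ((τ - p.1 + p.2 * Complex.I) ^ κ * (p.2 : ℂ) ^ 2)

/-- `λ_ψ := (1 - ψ(-1))/2 ∈ {0,1}`. -/
def lam {M : ℕ} (ψ : DirichletCharacter ℂ M) : ℕ := if ψ (-1) = 1 then 0 else 1

/-- Shimura's theta function `θ_ψ(τ) = (1/2) Σ_{n∈ℤ} ψ(n) n^{λ_ψ} q^{n²}`. -/
def shimuraTheta {M : ℕ} (ψ : DirichletCharacter ℂ M) (τ : ℂ) : ℂ :=
  (1 / 2) * ∑' n : ℤ, ψ (n : ZMod M) * (n : ℂ) ^ lam ψ *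
    Complex.exp (2 * π * Complex.I * (n : ℂ) ^ 2 * τ)

/-- Theta function of the conjugate character. -/
def shimuraThetaConj {M : ℕ} (ψ : DirichletCharacter ℂ M) (τ : ℂ) : ℂ :=
  (1 / 2) * ∑' n : ℤ, (starRingEnd ℂ) (ψ (n : ZMod M)) * (n : ℂ) ^ lam ψ *
    Complex.exp (2 * π * Complex.I * (n : ℂ) ^ 2 * τ)

/-- `‖m‖² = m_1² + ⋯ + m_ℓ²` for a tuple of positive integers. -/
def nsq {ℓ : ℕ} (m : Fin ℓ → ℕ+) : ℕ := ∑ j, (m j : ℕ) ^ 2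

/-- `m! = m_1 ⋯ m_ℓ`. -/
def prd {ℓ : ℕ} (m : Fin ℓ → ℕ+) : ℕ := ∏ j, (m j : ℕ)

/-- Summand of `f_ℓ⁻`. -/
def fMinusTerm {M : ℕ} (χ : DirichletCharacter ℂ M) (ℓ : ℕ) (τ : ℂ) (m : Fin ℓ → ℕ+) : ℂ :=
  χ ((prd m : ℕ) : ZMod M) * (((nsq m : ℝ) ^ ((2 - (ℓ : ℝ) / 2) - 1) : ℝ) : ℂ) *
    (incGamma (1 - (2 - (ℓ : ℝ) / 2)) (4 * π * (nsq m : ℝ) * τ.im) : ℂ) *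
    Complex.exp (-(2 * π * Complex.I * (nsq m : ℂ) * τ))

/-- `f_ℓ⁻`. -/
def fMinus {M : ℕ} (χ : DirichletCharacter ℂ M) (ℓ : ℕ) (τ : ℂ) : ℂ :=
  (1 / (Real.Gamma (1 - (2 - (ℓ : ℝ) / 2)) : ℂ)) * ∑' m : Fin ℓ → ℕ+, fMinusTerm χ ℓ τ m

/-- Summand of the coefficient `c(r)`, over pairs of tuples. -/
def cTerm {M₁ M₂ : ℕ} (χ : DirichletCharacter ℂ M₁) (ψ : DirichletCharacter ℂ M₂) (ℓ : ℕ)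
    (r : ℕ+) (p : (Fin ℓ → ℕ+) × (Fin ℓ → ℕ+)) : ℂ :=
  if nsq p.2 = nsq p.1 + (r : ℕ) then
    χ ((prd p.1 : ℕ) : ZMod M₁) * ψ ((prd p.2 : ℕ) : ZMod M₂) * (prd p.2 : ℂ) *
      (((nsq p.2 : ℝ) ^ ((2 - (ℓ : ℝ) / 2) - 1) *
          jacobiP (1 - (2 - (ℓ : ℝ) / 2)) (-(ℓ : ℝ) - 1) ℓ
            (1 - 2 * (nsq p.1 : ℝ) / (nsq p.2 : ℝ)) -
          (nsq p.1 : ℝ) ^ ((2 - (ℓ : ℝ) / 2) - 1) : ℝ) : ℂ)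
  else 0

/-- The coefficient `c(r)`. -/
def cCoeff {M₁ M₂ : ℕ} (χ : DirichletCharacter ℂ M₁) (ψ : DirichletCharacter ℂ M₂) (ℓ : ℕ)
    (r : ℕ+) : ℂ :=
  ∑' p : (Fin ℓ → ℕ+) × (Fin ℓ → ℕ+), cTerm χ ψ ℓ r p

/-- `f_ℓ⁺(τ) = θ_ψ(τ)^{-ℓ} Σ_{r≥1} c(r) q^r`. -/
def fPlus {M₁ M₂ : ℕ} (χ : DirichletCharacter ℂ M₁) (ψ : DirichletCharacter ℂ M₂) (ℓ : ℕ)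
    (τ : ℂ) : ℂ :=
  shimuraTheta ψ τ ^ (-(ℓ : ℤ)) *
    ∑' r : ℕ+, cCoeff χ ψ ℓ r * Complex.exp (2 * π * Complex.I * (r : ℂ) * τ)

/-- Möbius action of `SL₂(ℤ)` on the upper half-plane. -/
def moeb (γ : Matrix.SpecialLinearGroup (Fin 2) ℤ) (τ : ℂ) : ℂ :=
  ((γ 0 0 : ℤ) * τ + (γ 0 1 : ℤ)) / ((γ 1 0 : ℤ) * τ + (γ 1 1 : ℤ))

/-- Extended Legendre (Kronecker/Shimura) symbol `(c/d)` for odd `d`. -/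
def kron (c d : ℤ) : ℤ :=
  if 0 ≤ d then jacobiSym c d.natAbs
  else if c < 0 then -jacobiSym c d.natAbs else jacobiSym c d.natAbs

/-- `ε_d`, for odd `d`. -/
def epsd (d : ℤ) : ℂ := if d % 4 = 1 then 1 else Complex.I

/-- Small divisor function with polynomial `d²`. -/
def smallDiv2 {M₁ M₂ : ℕ} (χ : DirichletCharacter ℂ M₁) (ψ : DirichletCharacter ℂ M₂)
    (n : ℕ) : ℂ :=
  ∑ d ∈ n.divisors.filter (fun d => d ≤ n / d ∧ d % 2 = (n / d) % 2),
    χ (((n / d - d) / 2 : ℕ) : ZMod M₁) * ψ (((n / d + d) / 2 : ℕ) : ZMod M₂) * (d : ℂ) ^ 2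

/-- Small divisor function with polynomial `d`. -/
def smallDiv1 {M : ℕ} (ψ : DirichletCharacter ℂ M) (n : ℕ) : ℂ :=
  ∑ d ∈ n.divisors.filter (fun d => d ≤ n / d ∧ d % 2 = (n / d) % 2),
    ψ (((n / d - d) / 2 : ℕ) : ZMod M) * ψ (((n / d + d) / 2 : ℕ) : ZMod M) * (d : ℂ)

/-- Eisenstein series `E₂`. -/
def E2 (τ : ℂ) : ℂ :=
  1 - 24 * ∑' n : ℕ+, ((∑ d ∈ (n : ℕ).divisors, (d : ℂ)) *
    Complex.exp (2 * π * Complex.I * (n : ℂ) * τ))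

namespace Stmt14Aux

open MeasureTheory Set

set_option maxHeartbeats 1000000

lemma summable_pi_prod : ∀ (n : ℕ) (f : ℕ+ → ℝ), Summable f → (∀ i, 0 ≤ f i) →
    Summable (fun m : Fin n → ℕ+ => ∏ j, f (m j)) := by
  intro n
  induction n with
  | zero => intro f _ _; exact .of_finite
  | succ n ih =>
    intro f hf h0
    have h1 : (0:ℕ+ → ℝ) ≤ f := fun i => h0 i
    have h2 : (0:(Fin n → ℕ+) → ℝ) ≤ (fun m : Fin n → ℕ+ => ∏ j, f (m j)) :=
      fun m => Finset.prod_nonneg fun j _ => h0 _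
    have hprod : Summable (fun x : ℕ+ × (Fin n → ℕ+) => f x.1 * ∏ j, f (x.2 j)) :=
      Summable.mul_of_nonneg (f := f) (g := fun m : Fin n → ℕ+ => ∏ j, f (m j))
        hf (ih f hf h0) h1 h2
    rw [← (Fin.consEquiv fun _ : Fin (n+1) => ℕ+).summable_iff]
    refine hprod.congr fun x => ?_
    simp [Fin.consEquiv, Fin.prod_univ_succ]

lemma summable_exp_nsq (ℓ : ℕ) {c : ℝ} (hc : 0 < c) :
    Summable (fun m : Fin ℓ → ℕ+ => Real.exp (-c * (nsq m : ℝ))) := by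
  have hgeo : Summable (fun i : ℕ+ => Real.exp (-c) ^ (i : ℕ)) := by
    refine Summable.comp_injective ?_ (fun a b h => PNat.coe_injective h)
    exact summable_geometric_of_lt_one (Real.exp_nonneg _)
      (Real.exp_lt_one_iff.mpr (by linarith))
  have h1 : Summable (fun i : ℕ+ => Real.exp (-c * ((i : ℕ) ^ 2 : ℕ))) := by
    refine hgeo.of_nonneg_of_le (fun i => (Real.exp_pos _).le) (fun i => ?_)
    rw [← Real.exp_nat_mul]
    apply Real.exp_le_exp.mpr
    have h1 : (1:ℝ) ≤ (i:ℕ) := Nat.one_le_cast.mpr i.one_le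
    have h2 : (i : ℝ) ≤ ((i:ℕ)^2 : ℕ) := by push_cast; nlinarith
    nlinarith
  have := summable_pi_prod ℓ _ h1 (fun i => (Real.exp_pos _).le)
  refine this.congr fun m => ?_
  rw [← Real.exp_sum, nsq]
  push_cast
  rw [Finset.mul_sum]

lemma one_le_nsq {ℓ : ℕ} (hℓ : 1 ≤ ℓ) (m : Fin ℓ → ℕ+) : 1 ≤ nsq m := by
  have hj : 0 < ℓ := hℓ
  rw [nsq]
  calc 1 ≤ (m ⟨0, hj⟩ : ℕ)^2 := Nat.one_le_iff_ne_zero.mpr (pow_ne_zero _ (m _).ne_zero)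
    _ ≤ ∑ j, (m j : ℕ)^2 := Finset.single_le_sum (f := fun j : Fin ℓ => ((m j : ℕ))^2)
        (fun i _ => Nat.zero_le _) (Finset.mem_univ _)

def Gconst (s : ℝ) : ℝ := ∫ t in Set.Ioi (0:ℝ), t ^ (s - 1) * Real.exp (-(4⁻¹ * t))

lemma Gconst_integrable {s : ℝ} (hs : 0 < s) :
    IntegrableOn (fun t : ℝ => t ^ (s-1) * Real.exp (-(4⁻¹ * t))) (Set.Ioi 0) := by
  have := integrableOn_rpow_mul_exp_neg_mul_rpow (p := 1) (s := s - 1) (b := 4⁻¹)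
    (by linarith) one_pos (by norm_num)
  simpa [Real.rpow_one, neg_mul] using this

lemma incGamma_integrable {s : ℝ} (hs : 0 < s) {x : ℝ} (hx : 0 ≤ x) :
    IntegrableOn (fun t : ℝ => t ^ (s-1) * Real.exp (-t)) (Set.Ioi x) := by
  have := integrableOn_rpow_mul_exp_neg_mul_rpow (p := 1) (s := s - 1) (b := 1)
    (by linarith) one_pos (by norm_num)
  simp only [Real.rpow_one, neg_one_mul] at this
  exact this.mono_set (Ioi_subset_Ioi hx)

lemma incGamma_nonneg {s x : ℝ} (hx : 0 ≤ x) : 0 ≤ incGamma s x := by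
  refine setIntegral_nonneg measurableSet_Ioi fun t ht => ?_
  have : (0:ℝ) < t := lt_of_le_of_lt hx ht
  positivity

lemma Gconst_nonneg (s : ℝ) : 0 ≤ Gconst s := by
  refine setIntegral_nonneg measurableSet_Ioi fun t ht => ?_
  have : (0:ℝ) < t := ht
  positivity

lemma incGamma_le {s : ℝ} (hs : 0 < s) {x : ℝ} (hx : 0 ≤ x) :
    incGamma s x ≤ Gconst s * Real.exp (-(3/4) * x) := by
  have step1 : incGamma s x ≤
      ∫ t in Set.Ioi x, (t ^ (s-1) * Real.exp (-(4⁻¹ * t))) * Real.exp (-(3/4) * x) := by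
    refine setIntegral_mono_on (incGamma_integrable hs hx)
      (((Gconst_integrable hs).mono_set (Ioi_subset_Ioi hx)).mul_const _)
      measurableSet_Ioi fun t ht => ?_
    have htx : x ≤ t := le_of_lt ht
    have ht0 : (0:ℝ) < t := lt_of_le_of_lt hx ht
    rw [mul_assoc, ← Real.exp_add]
    refine mul_le_mul_of_nonneg_left (Real.exp_le_exp.mpr (by linarith)) (by positivity)
  have step2 : (∫ t in Set.Ioi x, (t ^ (s-1) * Real.exp (-(4⁻¹ * t))) * Real.exp (-(3/4) * x))
      ≤ ∫ t in Set.Ioi (0:ℝ), (t ^ (s-1) * Real.exp (-(4⁻¹ * t))) * Real.exp (-(3/4) * x) := by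
    refine setIntegral_mono_set ((Gconst_integrable hs).mul_const _) ?_
      (HasSubset.Subset.eventuallyLE (Ioi_subset_Ioi hx))
    filter_upwards [ae_restrict_mem measurableSet_Ioi] with t ht
    have : (0:ℝ) < t := ht
    positivity
  calc incGamma s x ≤ _ := step1
    _ ≤ _ := step2
    _ = Gconst s * Real.exp (-(3/4) * x) := by rw [integral_mul_const]; rfl

lemma term_bound {M : ℕ} (χ : DirichletCharacter ℂ M) {ℓ : ℕ} (hℓ : 3 ≤ ℓ) (τ : ℂ)
    (hv : 0 < τ.im) (m : Fin ℓ → ℕ+) :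
    ‖fMinusTerm χ ℓ τ m‖ ≤ Gconst (1 - (2 - (ℓ:ℝ)/2)) *
      Real.exp (-(π * τ.im) * (nsq m : ℝ)) := by
  have hl3 : (3:ℝ) ≤ (ℓ:ℝ) := by exact_mod_cast hℓ
  have hs : (0:ℝ) < 1 - (2 - (ℓ:ℝ)/2) := by linarith
  have hn1 : (1:ℝ) ≤ (nsq m : ℝ) := by exact_mod_cast one_le_nsq (by omega) m
  have hx : (0:ℝ) ≤ 4 * π * (nsq m : ℝ) * τ.im := by positivity
  have h1 : ‖χ ((prd m : ℕ) : ZMod M)‖ ≤ 1 := χ.norm_le_one _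
  have h2 : ‖((((nsq m : ℝ) ^ ((2 - (ℓ:ℝ)/2) - 1) : ℝ)) : ℂ)‖ ≤ 1 := by
    rw [Complex.norm_real, Real.norm_of_nonneg (Real.rpow_nonneg (by linarith) _)]
    exact Real.rpow_le_one_of_one_le_of_nonpos hn1 (by linarith)
  have h3 : ‖((incGamma (1 - (2 - (ℓ:ℝ)/2)) (4 * π * (nsq m : ℝ) * τ.im) : ℝ) : ℂ)‖ ≤
      Gconst (1 - (2 - (ℓ:ℝ)/2)) * Real.exp (-(3/4) * (4 * π * (nsq m : ℝ) * τ.im)) := by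
    rw [Complex.norm_real, Real.norm_of_nonneg (incGamma_nonneg hx)]
    exact incGamma_le hs hx
  have h4 : ‖Complex.exp (-(2 * π * Complex.I * ((nsq m : ℕ) : ℂ) * τ))‖ =
      Real.exp (2 * π * (nsq m : ℝ) * τ.im) := by
    rw [Complex.norm_exp]
    congr 1
    simp [Complex.mul_re, Complex.mul_im]
  calc ‖fMinusTerm χ ℓ τ m‖
      = ‖χ ((prd m : ℕ) : ZMod M)‖ * ‖((((nsq m : ℝ) ^ ((2 - (ℓ:ℝ)/2) - 1) : ℝ)) : ℂ)‖ *
        ‖((incGamma (1 - (2 - (ℓ:ℝ)/2)) (4 * π * (nsq m : ℝ) * τ.im) : ℝ) : ℂ)‖ *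
        ‖Complex.exp (-(2 * π * Complex.I * ((nsq m : ℕ) : ℂ) * τ))‖ := by
        rw [fMinusTerm, norm_mul, norm_mul, norm_mul]
    _ ≤ 1 * 1 * (Gconst (1 - (2 - (ℓ:ℝ)/2)) *
          Real.exp (-(3/4) * (4 * π * (nsq m : ℝ) * τ.im))) *
          Real.exp (2 * π * (nsq m : ℝ) * τ.im) := by
        refine mul_le_mul (mul_le_mul (mul_le_mul h1 h2 (norm_nonneg _) (by norm_num))
          h3 (norm_nonneg _) (by norm_num)) (le_of_eq h4) (norm_nonneg _)
          (by refine mul_nonneg (by norm_num) (mul_nonneg (Gconst_nonneg _) (Real.exp_nonneg _)))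
    _ = Gconst (1 - (2 - (ℓ:ℝ)/2)) * Real.exp (-(π * τ.im) * (nsq m : ℝ)) := by
        rw [one_mul, one_mul, mul_assoc, ← Real.exp_add]
        congr 1
        ring

end Stmt14Aux


/-- For `ℓ ≥ 3`, `k = 2 - ℓ/2`, and an even non-trivial Dirichlet
character `χ`, the function `f_ℓ⁻` decays exponentially as `v → ∞`: there are
`C, δ > 0` with `|f_ℓ⁻(τ)| ≤ C e^{-δv}` for all `τ = u + iv ∈ ℍ` with `v ≥ 1`. -/
theorem stmt14 {M : ℕ} (χ : DirichletCharacter ℂ M) (hχeven : χ (-1) = 1) (hχ : χ ≠ 1)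
    (ℓ : ℕ) (hℓ : 3 ≤ ℓ) :
    ∃ C δ : ℝ, 0 < C ∧ 0 < δ ∧
      ∀ τ : ℂ, 0 < τ.im → 1 ≤ τ.im → ‖fMinus χ ℓ τ‖ ≤ C * Real.exp (-δ * τ.im) := by
  classical
  have hl3 : (3:ℝ) ≤ (ℓ:ℝ) := by exact_mod_cast hℓ
  set s : ℝ := 1 - (2 - (ℓ:ℝ)/2) with hs_def
  have hs : 0 < s := by rw [hs_def]; linarith
  have hΓ : 0 < Real.Gamma s := Real.Gamma_pos_of_pos hs
  set S : ℝ := ∑' m : Fin ℓ → ℕ+, Real.exp (-(π/2) * (nsq m : ℝ)) with hS_def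
  have hS0 : 0 ≤ S := tsum_nonneg fun m => Real.exp_nonneg _
  refine ⟨max 1 ((Real.Gamma s)⁻¹ * (Stmt14Aux.Gconst s * S)), π/2,
    lt_of_lt_of_le one_pos (le_max_left _ _), by positivity, ?_⟩
  intro τ hv h1v
  have hnorm1 : ‖(1 / (Real.Gamma s : ℂ))‖ = (Real.Gamma s)⁻¹ := by
    rw [norm_div, norm_one, Complex.norm_real, Real.norm_of_nonneg hΓ.le, one_div]
  have hsum_v : Summable (fun m : Fin ℓ → ℕ+ => Real.exp (-(π * τ.im) * (nsq m : ℝ))) :=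
    Stmt14Aux.summable_exp_nsq ℓ (by positivity)
  have hsum_half : Summable (fun m : Fin ℓ → ℕ+ => Real.exp (-(π/2) * (nsq m : ℝ))) :=
    Stmt14Aux.summable_exp_nsq ℓ (by positivity)
  have hg : Summable (fun m : Fin ℓ → ℕ+ =>
      Stmt14Aux.Gconst s * Real.exp (-(π * τ.im) * (nsq m : ℝ))) := hsum_v.mul_left _
  have htsum : ‖∑' m : Fin ℓ → ℕ+, fMinusTerm χ ℓ τ m‖ ≤
      ∑' m : Fin ℓ → ℕ+, Stmt14Aux.Gconst s * Real.exp (-(π * τ.im) * (nsq m : ℝ)) :=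
    tsum_of_norm_bounded hg.hasSum fun m => Stmt14Aux.term_bound χ hℓ τ hv m
  have hpoint : ∀ m : Fin ℓ → ℕ+, Real.exp (-(π * τ.im) * (nsq m : ℝ)) ≤
      Real.exp (-(π/2) * τ.im) * Real.exp (-(π/2) * (nsq m : ℝ)) := by
    intro m
    rw [← Real.exp_add]
    apply Real.exp_le_exp.mpr
    have hn1 : (1:ℝ) ≤ (nsq m : ℝ) := by exact_mod_cast Stmt14Aux.one_le_nsq (by omega) m
    have hvn : (1:ℝ) ≤ τ.im * (nsq m : ℝ) := by nlinarith
    nlinarith [Real.pi_pos, mul_nonneg (sub_nonneg.mpr h1v) (sub_nonneg.mpr hn1), hvn]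
  have hsum2 : (∑' m : Fin ℓ → ℕ+, Real.exp (-(π * τ.im) * (nsq m : ℝ))) ≤
      Real.exp (-(π/2) * τ.im) * S := by
    rw [hS_def, ← tsum_mul_left]
    exact Summable.tsum_le_tsum hpoint hsum_v (hsum_half.mul_left _)
  rw [fMinus, norm_mul, ← hs_def, hnorm1]
  calc (Real.Gamma s)⁻¹ * ‖∑' m : Fin ℓ → ℕ+, fMinusTerm χ ℓ τ m‖
      ≤ (Real.Gamma s)⁻¹ * (Stmt14Aux.Gconst s * (Real.exp (-(π/2) * τ.im) * S)) := by
        refine mul_le_mul_of_nonneg_left ?_ (by positivity)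
        rw [tsum_mul_left] at htsum
        refine htsum.trans ?_
        exact mul_le_mul_of_nonneg_left hsum2 (Stmt14Aux.Gconst_nonneg s)
    _ = ((Real.Gamma s)⁻¹ * (Stmt14Aux.Gconst s * S)) * Real.exp (-(π/2) * τ.im) := by ring
    _ ≤ max 1 ((Real.Gamma s)⁻¹ * (Stmt14Aux.Gconst s * S)) * Real.exp (-(π/2) * τ.im) := by
        exact mul_le_mul_of_nonneg_right (le_max_right _ _) (Real.exp_nonneg _)
end
end
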